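/- arXiv:2309.07279 — 5 statements merged into one kernel-verified Lean document; each statement's English description precedes it below -/
import Mathlib

section
/- Let R be a unique factorization domain, let f, g ∈ R be nonzero elements that are relatively prime, and let M be a flat R-module. Then the canonical map from M to M_f ×_{M_{fg}} M_g is bijective: the map M → M_f × M_g sending x to the pair of its canonical images is injective, and its image is exactly the set of pairs (a, b) ∈ M_f × M_g whose images in M_{fg} coincide. (Abstract form of the paper's Lemma: for a flat R_L-module M, the restriction map M → M_{f_I} ×_{M_{f_I g_I}} M_{g_I} is an isomorphism.) -/
open TensorProduct LinearMap

lemma flatAux_smul_injective {R M : Type*} [CommRing R] [IsDomain R]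
    [AddCommGroup M] [Module R M] [Module.Flat R M] {r : R} (hr : r ≠ 0) :
    Function.Injective (fun m : M => r • m) := by
  have h1 : Function.Injective (LinearMap.lsmul R R r) := by
    intro a b hab
    exact mul_left_cancel₀ hr (by simpa using hab)
  have h2 := Module.Flat.lTensor_preserves_injective_linearMap (M := M) _ h1
  have key : ∀ m : M,
      (TensorProduct.rid R M) ((LinearMap.lsmul R R r).lTensor M
        ((TensorProduct.rid R M).symm m)) = r • m := by
    intro m
    simp [TensorProduct.rid_symm_apply]
  intro x y hxy
  have : (LinearMap.lsmul R R r).lTensor M ((TensorProduct.rid R M).symm x)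
      = (LinearMap.lsmul R R r).lTensor M ((TensorProduct.rid R M).symm y) :=
    (TensorProduct.rid R M).injective (by rw [key, key]; exact hxy)
  exact (TensorProduct.rid R M).symm.injective (h2 this)

lemma flatAux_div {R M : Type*} [CommRing R] [IsDomain R] [UniqueFactorizationMonoid R]
    [AddCommGroup M] [Module R M] [Module.Flat R M] {a b : R}
    (ha : a ≠ 0) (hab : IsRelPrime a b) {x y : M} (h : b • x = a • y) :
    ∃ z : M, x = a • z ∧ y = b • z := by
  classical
  let d1 : R →ₗ[R] R × R := LinearMap.prod (LinearMap.lsmul R R a) (LinearMap.lsmul R R b)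
  let d2 : R × R →ₗ[R] R :=
    (LinearMap.lsmul R R b) ∘ₗ (LinearMap.fst R R R)
      - (LinearMap.lsmul R R a) ∘ₗ (LinearMap.snd R R R)
  have hex : Function.Exact d1 d2 := by
    intro p
    constructor
    · intro hp
      have hp' : b * p.1 = a * p.2 := by
        have h0 : b * p.1 - a * p.2 = 0 := by simpa [d2] using hp
        exact sub_eq_zero.mp h0
      obtain ⟨z, hz⟩ : a ∣ p.1 := hab.dvd_of_dvd_mul_left ⟨p.2, hp'⟩
      refine ⟨z, ?_⟩
      have hp2 : p.2 = b * z := by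
        refine mul_left_cancel₀ ha ?_
        rw [← hp', hz]; ring
      have hd : d1 z = (a * z, b * z) := by
        simp [d1]
      rw [hd, ← hz, ← hp2]
    · rintro ⟨z, rfl⟩
      simp [d1, d2]; ring
  have hex2 := Module.Flat.lTensor_exact M hex
  set t : M ⊗[R] (R × R) := x ⊗ₜ[R] ((1 : R), (0 : R)) + y ⊗ₜ[R] ((0 : R), (1 : R)) with ht
  have h2 : d2.lTensor M t = 0 := by
    have e1 : d2.lTensor M t = x ⊗ₜ[R] b - y ⊗ₜ[R] a := by
      simp [ht, d2]
    have e2 : x ⊗ₜ[R] b - y ⊗ₜ[R] a = (b • x - a • y) ⊗ₜ[R] (1 : R) := by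
      rw [TensorProduct.sub_tmul, TensorProduct.smul_tmul, TensorProduct.smul_tmul,
        smul_eq_mul, smul_eq_mul, mul_one, mul_one]
    rw [e1, e2, h, sub_self, TensorProduct.zero_tmul]
  obtain ⟨s, hs⟩ := (hex2 t).mp h2
  refine ⟨TensorProduct.rid R M s, ?_, ?_⟩
  · -- compare first components
    let e1 : M ⊗[R] (R × R) →ₗ[R] M :=
      (TensorProduct.rid R M).toLinearMap ∘ₗ (LinearMap.fst R R R).lTensor M
    have k1 : ∀ s : M ⊗[R] R, e1 (d1.lTensor M s) = a • (TensorProduct.rid R M s) := by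
      intro s
      induction s using TensorProduct.induction_on with
      | zero => simp
      | tmul m r => simp [e1, d1, mul_comm, smul_smul]
      | add u v hu hv => simp [map_add, hu, hv, smul_add]
    have ht1 : e1 t = x := by simp [e1, ht]
    rw [← ht1, ← hs, k1]
  · let e2 : M ⊗[R] (R × R) →ₗ[R] M :=
      (TensorProduct.rid R M).toLinearMap ∘ₗ (LinearMap.snd R R R).lTensor M
    have k2 : ∀ s : M ⊗[R] R, e2 (d1.lTensor M s) = b • (TensorProduct.rid R M s) := by
      intro s
      induction s using TensorProduct.induction_on with
      | zero => simp
      | tmul m r => simp [e2, d1, mul_comm, smul_smul]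
      | add u v hu hv => simp [map_add, hu, hv, smul_add]
    have ht2 : e2 t = y := by simp [e2, ht]
    rw [← ht2, ← hs, k2]


/-- **Hartogs-principle identity for localizations of a flat module over a UFD.**
Let `R` be a unique factorization domain, `f, g ∈ R` nonzero relatively prime elements,
and `M` a flat `R`-module.  Then the canonical map from `M` to the fiber product
`M_f ×_{M_{fg}} M_g` is bijective: the map `M → M_f × M_g` is injective and its image is
exactly the set of pairs whose images in `M_{fg}` coincide. -/
theorem flat_module_bijective_to_fiber_product_of_localizations
    {R : Type*} [CommRing R] [IsDomain R] [UniqueFactorizationMonoid R]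
    (f g : R) (hf : f ≠ 0) (hg : g ≠ 0) (hrel : IsRelPrime f g)
    {M Mf Mg Mfg : Type*}
    [AddCommGroup M] [Module R M] [Module.Flat R M]
    [AddCommGroup Mf] [Module R Mf] [AddCommGroup Mg] [Module R Mg]
    [AddCommGroup Mfg] [Module R Mfg]
    (ιf : M →ₗ[R] Mf) (ιg : M →ₗ[R] Mg) (ιfg : M →ₗ[R] Mfg)
    [IsLocalizedModule (Submonoid.powers f) ιf]
    [IsLocalizedModule (Submonoid.powers g) ιg]
    [IsLocalizedModule (Submonoid.powers (f * g)) ιfg]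
    (φf : Mf →ₗ[R] Mfg) (φg : Mg →ₗ[R] Mfg)
    (hφf : φf ∘ₗ ιf = ιfg) (hφg : φg ∘ₗ ιg = ιfg) :
    Function.Injective (fun x : M => (ιf x, ιg x)) ∧
      Set.range (fun x : M => (ιf x, ιg x)) = {p : Mf × Mg | φf p.1 = φg p.2} := by
  have hfg : f * g ≠ 0 := mul_ne_zero hf hg
  constructor
  · intro x y hxy
    have h1 : ιf x = ιf y := congrArg Prod.fst hxy
    obtain ⟨c, hc⟩ := IsLocalizedModule.exists_of_eq (S := Submonoid.powers f) (f := ιf) h1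
    obtain ⟨n, hn⟩ := c.2
    have hcne : (c : R) ≠ 0 := by rw [← hn]; exact pow_ne_zero n hf
    exact flatAux_smul_injective hcne (by simpa [Submonoid.smul_def] using hc)
  · ext p
    constructor
    · rintro ⟨x, rfl⟩
      show φf (ιf x) = φg (ιg x)
      rw [← LinearMap.comp_apply, ← LinearMap.comp_apply, hφf, hφg]
    · intro hp
      obtain ⟨⟨x, s⟩, hx⟩ := IsLocalizedModule.surj (Submonoid.powers f) ιf p.1
      obtain ⟨⟨y, t⟩, hy⟩ := IsLocalizedModule.surj (Submonoid.powers g) ιg p.2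
      obtain ⟨n, hn⟩ := s.2
      obtain ⟨m, hm⟩ := t.2
      -- push to Mfg
      have hx' : (s : R) • p.1 = ιf x := by rw [← Submonoid.smul_def]; exact hx
      have hy' : (t : R) • p.2 = ιg y := by rw [← Submonoid.smul_def]; exact hy
      have h1 : (s : R) • φf p.1 = ιfg x := by
        rw [← map_smul, hx', ← LinearMap.comp_apply, hφf]
      have h2 : (t : R) • φg p.2 = ιfg y := by
        rw [← map_smul, hy', ← LinearMap.comp_apply, hφg]
      have h3 : ιfg ((t : R) • x) = ιfg ((s : R) • y) := by
        rw [map_smul, map_smul, ← h1, ← h2, hp]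
        rw [smul_comm]
      obtain ⟨c, hc⟩ := IsLocalizedModule.exists_of_eq
        (S := Submonoid.powers (f * g)) (f := ιfg) h3
      obtain ⟨k, hk⟩ := c.2
      have hcne : (c : R) ≠ 0 := by rw [← hk]; exact pow_ne_zero k hfg
      have h4 : (t : R) • x = (s : R) • y := by
        apply flatAux_smul_injective hcne
        simpa [Submonoid.smul_def] using hc
      -- now use the division lemma with a = s = f^n, b = t = g^m
      have hsne : (s : R) ≠ 0 := by rw [← hn]; exact pow_ne_zero n hf
      have hrel' : IsRelPrime (s : R) (t : R) := by
        rw [← hn, ← hm]; exact hrel.pow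
      obtain ⟨z, hz1, hz2⟩ := flatAux_div hsne hrel' h4
      refine ⟨z, ?_⟩
      have e1 : ιf z = p.1 := by
        apply IsLocalizedModule.smul_injective ιf s
        show s • ιf z = s • p.1
        rw [Submonoid.smul_def, Submonoid.smul_def, ← map_smul, ← hz1, hx']
      have e2 : ιg z = p.2 := by
        apply IsLocalizedModule.smul_injective ιg t
        show t • ιg z = t • p.2
        rw [Submonoid.smul_def, Submonoid.smul_def, ← map_smul, ← hz2, hy']
      simp [e1, e2]
end

section
/- Let P be a set of roots of L such that the sum of two elements of P belongs to P whenever it is a root, and such that no sum of a nonempty finite family (with repetitions allowed) of elements of P equals zero. Then for every element u of N := Σ_{α∈P} L_α (the sum of the root spaces indexed by P), the adjoint endomorphism ad u : L → L is nilpotent. -/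
/-!
Write `χ ≺ χ'` when `χ' - χ` lies in the additive semigroup `S` generated by `P`. The hypothesis
on sums says exactly that `0 ∉ S`, so `≺` is a strict order, and it is well founded on the finite
set of weights. Since `ad u` maps `L_χ` into `Σ_{α ∈ P} L_{χ + α}`, induction along `≺` (from the
top down) puts every weight space inside the generalized `0`-eigenspace of `ad u`; as the weight
spaces span `L`, that eigenspace is everything, i.e. `ad u` is nilpotent.
-/

open LieModule LieAlgebra

theorem AddSubsemigroup.exists_fin_sum_eq_of_mem_closure {G : Type*} [AddCommMonoid G]
    {P : Set G} {x : G} (hx : x ∈ closure P) :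
    ∃ (n : ℕ) (c : Fin (n + 1) → G), (∀ i, c i ∈ P) ∧ ∑ i, c i = x := by
  induction hx using closure_induction with
  | mem x hx => exact ⟨0, fun _ ↦ x, fun _ ↦ hx, by simp⟩
  | add x y _ _ hx hy =>
    obtain ⟨n, c, hcP, rfl⟩ := hx
    obtain ⟨m, d, hdP, rfl⟩ := hy
    refine ⟨n + 1 + m, Fin.append (m := n + 1) (n := m + 1) c d,
      Fin.addCases (m := n + 1) (n := m + 1) ?_ ?_, ?_⟩
    · exact (Fin.sum_univ_add (a := n + 1) (b := m + 1) _).trans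
        (by simp only [Fin.append_left, Fin.append_right])
    · simpa using hcP
    · simpa using hdP

theorem AddSubsemigroup.isStrictOrder_sub_mem {G : Type*} [AddCommGroup G]
    {S : AddSubsemigroup G} (hS : (0 : G) ∉ S) : IsStrictOrder G (fun a b ↦ a - b ∈ S) where
  irrefl a := by simpa using hS
  trans a b c hab hbc := by simpa using S.add_mem hab hbc

theorem Module.End.isNilpotent_of_mapsTo_iSup_add {R M G : Type*} [CommRing R]
    [AddCommGroup M] [Module R M] [Module.Finite R M] [AddCommGroup G]
    {N : G → Submodule R M} (hN : ⨆ χ, N χ = ⊤) (hfin : {χ | N χ ≠ ⊥}.Finite)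
    {P : Set G} (hP : (0 : G) ∉ AddSubsemigroup.closure P) {f : Module.End R M}
    (hf : ∀ χ, ∀ x ∈ N χ, f x ∈ ⨆ α ∈ P, N (χ + α)) : IsNilpotent f := by
  set Z := f.maxGenEigenspace 0
  have mem_Z : ∀ x, x ∈ Z ↔ ∃ k, (f ^ k) x = 0 := by simp [Z]
  have mem_Z_of_apply_mem : ∀ x, f x ∈ Z → x ∈ Z := by
    simp only [mem_Z]
    rintro x ⟨k, hk⟩
    exact ⟨k + 1, by rwa [pow_succ, Module.End.mul_apply]⟩
  have := (AddSubsemigroup.closure P).isStrictOrder_sub_mem hP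
  have hNZ : ∀ χ, N χ ≤ Z := by
    intro χ
    rcases eq_or_ne (N χ) ⊥ with hχ | hχ
    · simp [hχ]
    refine (hfin.wellFoundedOn (r := fun a b ↦ a - b ∈ AddSubsemigroup.closure P)).induction
      (P := fun χ ↦ N χ ≤ Z) hχ fun χ _ ih x hx ↦ ?_
    suffices ⨆ α ∈ P, N (χ + α) ≤ Z from mem_Z_of_apply_mem x (this (hf χ x hx))
    refine iSup₂_le fun α hα ↦ ?_
    rcases eq_or_ne (N (χ + α)) ⊥ with hχα | hχα
    · simp [hχα]
    exact ih _ hχα (by simpa using AddSubsemigroup.subset_closure hα)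
  have hZ : Z = ⊤ := top_le_iff.mp (hN ▸ iSup_le hNZ)
  exact Module.End.isNilpotent_iff_of_finite.mpr fun x ↦ (mem_Z x).mp (hZ ▸ Submodule.mem_top)

section

variable {R L M : Type*} [CommRing R] [LieRing L] [LieAlgebra R L] {H : LieSubalgebra R L}
  [LieRing.IsNilpotent H] [AddCommGroup M] [Module R M] [LieRingModule L M] [LieModule R L M]

theorem LieModule.lie_mem_iSup_genWeightSpace_add {P : Set (H → R)} {x : L}
    (hx : x ∈ ⨆ α ∈ P, rootSpace H α) {χ : H → R} {m : M} (hm : m ∈ genWeightSpace M χ) :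
    ⁅x, m⁆ ∈ ⨆ α ∈ P, genWeightSpace M (χ + α) := by
  induction hx using LieSubmodule.iSup_induction' with
  | zero => simp
  | add _ _ _ _ hy hz => rw [add_lie]; exact add_mem hy hz
  | mem α y hy =>
    by_cases hα : α ∈ P
    · replace hy : y ∈ rootSpace H α := by simpa [hα] using hy
      apply LieSubmodule.mem_iSup_of_mem α
      simpa [hα, add_comm χ] using lie_mem_genWeightSpace_of_mem_genWeightSpace hy hm
    · simp_all

end

section

variable {K L M : Type*} [Field K] [LieRing L] [LieAlgebra K L] {H : LieSubalgebra K L}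
  [LieRing.IsNilpotent H] [AddCommGroup M] [Module K M] [LieRingModule L M] [LieModule K L M]
  [IsTriangularizable K H M] [FiniteDimensional K M]

theorem LieModule.isNilpotent_toEnd_of_mem_iSup_rootSpace {P : Set (H → K)}
    (hP : (0 : H → K) ∉ AddSubsemigroup.closure P) {x : L} (hx : x ∈ ⨆ α ∈ P, rootSpace H α) :
    _root_.IsNilpotent (toEnd K L M x) := by
  refine Module.End.isNilpotent_of_mapsTo_iSup_add (N := fun χ ↦ (genWeightSpace M χ).toSubmodule)
    ?_ ?_ hP fun χ m hm ↦ ?_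
  · simpa [← LieSubmodule.iSup_toSubmodule] using iSup_genWeightSpace_eq_top K H M
  · simpa using finite_genWeightSpace_ne_bot K H M
  · simpa [← LieSubmodule.iSup_toSubmodule] using lie_mem_iSup_genWeightSpace_add hx hm

end

theorem isNilpotent_ad_of_mem_sum_rootSpaces_general
    {K : Type*} [Field K] [IsAlgClosed K]
    {L : Type*} [LieRing L] [LieAlgebra K L] [Module.Finite K L]
    (H : LieSubalgebra K L) [H.IsCartanSubalgebra]
    (P : Set (H → K))
    (hsum : ∀ (n : ℕ) (c : Fin (n + 1) → (H → K)),
      (∀ i, c i ∈ P) → ∑ i, c i ≠ 0)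
    (u : L) (hu : u ∈ ⨆ α ∈ P, rootSpace H α) :
    IsNilpotent (LieAlgebra.ad K L u) := by
  have hP0 : (0 : H → K) ∉ AddSubsemigroup.closure P := fun h0 ↦
    let ⟨n, c, hcP, hc⟩ := AddSubsemigroup.exists_fin_sum_eq_of_mem_closure h0
    hsum n c hcP hc
  exact LieModule.isNilpotent_toEnd_of_mem_iSup_rootSpace hP0 hu

/-- **Nilpotency of adjoint action of elements of a sum of root spaces indexed by a
positively-closed set of roots.**
`K` algebraically closed of characteristic zero, `L` a finite-dimensional Lie algebra over `K`
with nondegenerate Killing form, `H` a Cartan subalgebra.  A root is a nonzero `α : H → K`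
with nonzero root space.  Let `P` be a set of roots closed under addition whenever the sum is
a root, such that no sum of a nonempty finite family (repetitions allowed) of elements of `P`
is zero.  Then for every `u` in `N := Σ_{α ∈ P} L_α`, the endomorphism `ad u` is nilpotent. -/
theorem isNilpotent_ad_of_mem_sum_rootSpaces
    {K : Type*} [Field K] [IsAlgClosed K] [CharZero K]
    {L : Type*} [LieRing L] [LieAlgebra K L] [Module.Finite K L]
    [LieAlgebra.IsKilling K L]
    (H : LieSubalgebra K L) [H.IsCartanSubalgebra]
    (P : Set (H → K))
    (hP : ∀ α ∈ P, α ≠ 0 ∧ rootSpace H α ≠ ⊥)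
    (hadd : ∀ α ∈ P, ∀ β ∈ P, α + β ≠ 0 → rootSpace H (α + β) ≠ ⊥ → α + β ∈ P)
    (hsum : ∀ (n : ℕ) (c : Fin (n + 1) → (H → K)),
      (∀ i, c i ∈ P) → ∑ i, c i ≠ 0)
    (u : L) (hu : u ∈ ⨆ α ∈ P, rootSpace H α) :
    IsNilpotent (LieAlgebra.ad K L u) :=
  isNilpotent_ad_of_mem_sum_rootSpaces_general H P hsum u hu
end

section
/- Let P be a set of roots of L such that the sum of two elements of P belongs to P whenever it is a root, and such that no sum of a nonempty finite family of elements of P equals zero. Let h ∈ H and let n ∈ N := Σ_{α∈P} L_α. Then the characteristic polynomial of the endomorphism ad(h + n) of L is equal to the characteristic polynomial of ad h. (This is the Lie-theoretic content of the commutativity of the diagram 𝔟 → 𝔱 → 𝔠 versus 𝔟 ↪ 𝔤 → 𝔠 used in the paper's Lemma on reduction in steps: the image of an element of a Borel subalgebra under the adjoint-invariant quotient map depends only on its Cartan component.) -/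
/-!
Order the weights of `H` on `L` by `χ ≤ χ'` iff `χ' - χ` is a sum of elements of `P`; because no
nonempty sum of elements of `P` vanishes, this is a partial order. The element `n` maps `L_χ` into
the sum of the `L_{α + χ}`, `α ∈ P`, so in a basis adapted to the weight space decomposition and
listed along a linear extension of this order, `ad h` is block diagonal and `ad n` is strictly
block triangular. Hence `ad (h + n)` is block triangular with the same diagonal blocks as `ad h`.
-/

open LieModule LieAlgebra

namespace Matrix

theorem BlockTriangular.charpoly_add_of_forall_le {n R α : Type*} [Fintype n] [DecidableEq n]
    [CommRing R] [LinearOrder α] {A B : Matrix n n R} {b : n → α} (hA : A.BlockTriangular b)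
    (hB : ∀ i j, b j ≤ b i → B i j = 0) :
    (A + B).charpoly = A.charpoly := by
  have hAB : (A + B).BlockTriangular b := hA.add fun i j hij => hB i j hij.le
  rw [hAB.charpoly, hA.charpoly]
  refine Finset.prod_congr rfl fun a _ => ?_
  congr 1
  ext ⟨i, hi⟩ ⟨j, hj⟩
  simp [toSquareBlock_def, hB i j (hj.trans hi.symm).le]

end Matrix

theorem DirectSum.IsInternal.collectedBasis_repr_eq_zero_of_mem_iSup {ι R M : Type*}
    [DecidableEq ι] [Ring R] [AddCommGroup M] [Module R M] {V : ι → Submodule R M}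
    (hV : DirectSum.IsInternal V) {α : ι → Type*} (v : ∀ i, Module.Basis (α i) R (V i))
    {p : ι → Prop} {x : M} (hx : x ∈ ⨆ (j) (_ : p j), V j) {i : ι} (hi : ¬ p i) (a : α i) :
    (hV.collectedBasis v).repr x ⟨i, a⟩ = 0 := by
  suffices ⨆ (j) (_ : p j), V j ≤ LinearMap.ker ((hV.collectedBasis v).coord ⟨i, a⟩) from this hx
  refine iSup₂_le fun j hj y hy => ?_
  exact hV.collectedBasis_repr_of_mem_ne v (fun h : j = i => hi (h ▸ hj)) hy

theorem LinearMap.charpoly_add_eq_of_mapsTo_iSup_gt {K M ι : Type*} [Field K] [AddCommGroup M]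
    [Module K M] [Module.Finite K M] [PartialOrder ι] [Finite ι] [DecidableEq ι]
    {V : ι → Submodule K M} (hV : DirectSum.IsInternal V) {f g : Module.End K M}
    (hf : ∀ i, ∀ x ∈ V i, f x ∈ V i)
    (hg : ∀ i, ∀ x ∈ V i, g x ∈ ⨆ j > i, V j) :
    (f + g).charpoly = f.charpoly := by
  have := Fintype.ofFinite ι
  let v := fun i => Module.finBasis K (V i)
  let b := hV.collectedBasis v
  -- `g` raises the index, so its matrix is lower block triangular: order the blocks dually.
  let β : (Σ i, Fin (Module.finrank K (V i))) → (LinearExtension ι)ᵒᵈ :=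
    fun k => OrderDual.toDual (toLinearExtension k.1)
  have hF : (toMatrix b b f).BlockTriangular β := by
    rintro ⟨i, a⟩ l hli
    rw [toMatrix_apply]
    exact hV.collectedBasis_repr_of_mem_ne _ (fun h => hli.ne (by simp only [β, h]))
      (hf _ _ (hV.collectedBasis_mem v l))
  have hG : ∀ k l, β l ≤ β k → toMatrix b b g k l = 0 := by
    rintro ⟨i, a⟩ l hli
    rw [toMatrix_apply]
    refine hV.collectedBasis_repr_eq_zero_of_mem_iSup v (hg _ _ (hV.collectedBasis_mem v l))
      (fun hlt => ?_) a
    exact (lt_of_le_of_ne (toLinearExtension.monotone hlt.le) hlt.ne).not_ge hli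
  rw [← charpoly_toMatrix f b, ← charpoly_toMatrix (f + g) b, map_add]
  exact hF.charpoly_add_of_forall_le hG

theorem List.eq_nil_of_sum_eq_zero_of_forall_mem {G : Type*} [AddCommMonoid G] {P : Set G}
    (hP : ∀ (n : ℕ) (c : Fin (n + 1) → G), (∀ i, c i ∈ P) → ∑ i, c i ≠ 0) {l : List G}
    (hl : ∀ x ∈ l, x ∈ P) (hsum : l.sum = 0) : l = [] := by
  cases l with
  | nil => rfl
  | cons y t =>
    exact (hP t.length (fun i => (y :: t)[i.1]) (fun i => hl _ (List.getElem_mem _))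
      ((Fin.sum_univ_getElem _).trans hsum)).elim

def AddGroupCone.closure {G : Type*} [AddCommGroup G] (P : Set G)
    (hP : ∀ (n : ℕ) (c : Fin (n + 1) → G), (∀ i, c i ∈ P) → ∑ i, c i ≠ 0) : AddGroupCone G where
  toAddSubmonoid := AddSubmonoid.closure P
  eq_zero_of_mem_of_neg_mem' {a} ha hna := by
    obtain ⟨l, hlP, rfl⟩ := AddSubmonoid.exists_list_of_mem_closure ha
    obtain ⟨l', hl'P, hl'⟩ := AddSubmonoid.exists_list_of_mem_closure hna
    have hnil : l ++ l' = [] := List.eq_nil_of_sum_eq_zero_of_forall_mem hP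
      (List.forall_mem_append.mpr ⟨hlP, hl'P⟩) (by rw [List.sum_append, hl', add_neg_cancel])
    simp [(List.append_eq_nil_iff.mp hnil).1]

theorem LieModule.isInternal_genWeightSpace (K L M : Type*) [Field K] [LieRing L]
    [LieAlgebra K L] [LieRing.IsNilpotent L] [AddCommGroup M] [Module K M] [LieRingModule L M]
    [LieModule K L M] [FiniteDimensional K M] [IsTriangularizable K L M]
    [DecidableEq (Weight K L M)] :
    DirectSum.IsInternal fun χ : Weight K L M => (genWeightSpace M χ : Submodule K M) :=
  DirectSum.isInternal_submodule_of_iSupIndep_of_iSup_eq_top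
    (LieSubmodule.iSupIndep_toSubmodule.mpr <| iSupIndep_genWeightSpace' K L M)
    (LieSubmodule.iSup_toSubmodule_eq_top.mpr <| iSup_genWeightSpace_eq_top' K L M)

theorem LieAlgebra.lie_mem_iSup_genWeightSpace_sub_mem {R L : Type*} [CommRing R] [LieRing L]
    [LieAlgebra R L] {H : LieSubalgebra R L} [LieRing.IsNilpotent H] {M : Type*} [AddCommGroup M]
    [Module R M] [LieRingModule L M] [LieModule R L M] {P : Set (H → R)} {x : L}
    (hx : x ∈ ⨆ α ∈ P, rootSpace H α) {χ : H → R} {m : M} (hm : m ∈ genWeightSpace M χ) :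
    ⁅x, m⁆ ∈ ⨆ (χ' : Weight R H M) (_ : ⇑χ' - χ ∈ P), genWeightSpace M χ' := by
  induction hx using LieSubmodule.iSup_induction' with
  | zero => simp
  | add y z _ _ hy hz => rw [add_lie]; exact add_mem hy hz
  | mem α y hy =>
    induction hy using LieSubmodule.iSup_induction' with
    | zero => simp
    | add y z _ _ hy hz => rw [add_lie]; exact add_mem hy hz
    | mem hα y hy =>
      have hym := lie_mem_genWeightSpace_of_mem_genWeightSpace hy hm
      by_cases hbot : genWeightSpace M (α + χ) = ⊥
      · rw [hbot, LieSubmodule.mem_bot] at hym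
        simp [hym]
      · refine LieSubmodule.mem_iSup_of_mem ⟨α + χ, hbot⟩ (LieSubmodule.mem_iSup_of_mem ?_ hym)
        rwa [Weight.coe_weight_mk, add_sub_cancel_right]

theorem charpoly_ad_add_nilRadical_eq_general
    {K : Type*} [Field K] [IsAlgClosed K]
    {L : Type*} [LieRing L] [LieAlgebra K L] [Module.Finite K L]
    (H : LieSubalgebra K L) [H.IsCartanSubalgebra]
    (P : Set (H → K))
    (hsum : ∀ (n : ℕ) (c : Fin (n + 1) → (H → K)),
      (∀ i, c i ∈ P) → ∑ i, c i ≠ 0)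
    (h : H) (n : L) (hn : n ∈ ⨆ α ∈ P, rootSpace H α) :
    (LieAlgebra.ad K L ((h : L) + n)).charpoly = (LieAlgebra.ad K L (h : L)).charpoly := by
  classical
  let : PartialOrder (H → K) := .mkOfAddGroupCone (AddGroupCone.closure P hsum)
  let : PartialOrder (Weight K H L) := .lift _ DFunLike.coe_injective
  have hlt : ∀ χ χ' : Weight K H L, ⇑χ' - χ ∈ P → χ < χ' := by
    intro χ χ' hχ
    refine lt_of_le_of_ne (AddSubmonoid.subset_closure hχ) fun hχχ' => ?_
    exact hsum 0 (fun _ => ⇑χ' - χ) (fun _ => hχ) (by simp [hχχ'])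
  rw [map_add]
  refine LinearMap.charpoly_add_eq_of_mapsTo_iSup_gt (isInternal_genWeightSpace K H L)
    (fun χ x hx => (genWeightSpace L χ).lie_mem (x := h) hx) (fun χ x hx => ?_)
  have hraise := biSup_mono (f := fun χ' : Weight K H L => genWeightSpace L χ') (hlt χ)
    (lie_mem_iSup_genWeightSpace_sub_mem hn hx)
  simpa [← LieSubmodule.iSup_toSubmodule] using hraise

/-- **The characteristic polynomial of `ad(h + n)` depends only on the Cartan component.**
`K` algebraically closed of characteristic zero, `L` a finite-dimensional Lie algebra over `K`
with nondegenerate Killing form, `H` a Cartan subalgebra.  Let `P` be a set of roots closed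
under addition whenever the sum is a root, with no nonempty finite family of elements of `P`
(repetitions allowed) summing to zero.  Then for `h ∈ H` and `n ∈ N := Σ_{α ∈ P} L_α`, the
characteristic polynomial of `ad (h + n)` equals that of `ad h`. -/
theorem charpoly_ad_add_nilRadical_eq
    {K : Type*} [Field K] [IsAlgClosed K] [CharZero K]
    {L : Type*} [LieRing L] [LieAlgebra K L] [Module.Finite K L]
    [LieAlgebra.IsKilling K L]
    (H : LieSubalgebra K L) [H.IsCartanSubalgebra]
    (P : Set (H → K))
    (hP : ∀ α ∈ P, α ≠ 0 ∧ rootSpace H α ≠ ⊥)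
    (hadd : ∀ α ∈ P, ∀ β ∈ P, α + β ≠ 0 → rootSpace H (α + β) ≠ ⊥ → α + β ∈ P)
    (hsum : ∀ (n : ℕ) (c : Fin (n + 1) → (H → K)),
      (∀ i, c i ∈ P) → ∑ i, c i ≠ 0)
    (h : H) (n : L) (hn : n ∈ ⨆ α ∈ P, rootSpace H α) :
    (LieAlgebra.ad K L ((h : L) + n)).charpoly = (LieAlgebra.ad K L (h : L)).charpoly :=
  charpoly_ad_add_nilRadical_eq_general H P hsum h n hn
end

section
/- Let P be a positive system of roots of L, let h ∈ H satisfy α(h) ≠ 0 for every root α, and let n ∈ N := Σ_{α∈P} L_α. Then there exists u ∈ N such that ad u is nilpotent and exp(ad u)(h + n) = h. (Surjectivity part of the isomorphism U × 𝔱_gen ≅ 𝔟_gen established, at the level of points, in the paper's proof of the lemma comparing Hamiltonian reduction with restriction over the generic locus.) -/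
open LieModule LieAlgebra

/-- The exponential `Σ_{k ≥ 0} (1/k!) • f ^ k` of a nilpotent endomorphism of a
finite-dimensional space.  A nilpotent endomorphism `f` of a space of dimension `d`
satisfies `f ^ d = 0`, so truncating at `k ≤ d` computes the full (finite) sum. -/
noncomputable def expNilpotent {K L : Type*} [Field K] [AddCommGroup L] [Module K L]
    (f : Module.End K L) : Module.End K L :=
  ∑ k ∈ Finset.range (Module.finrank K L + 1), (k.factorial : K)⁻¹ • f ^ k

/-!
Let `N = ⨁_{α ∈ P} L_α`, and let `N_k` be the sum of the root spaces `L_ψ` over the weights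
`ψ` reached from `P` by `k` successive additions of elements of `P` passing only through
weights. Since no nonempty sum of elements of `P` vanishes, the weights along such a chain are
pairwise distinct, so `N_k = 0` once `k` is the number of weights; the same argument shows that
`ad u` is nilpotent for `u ∈ N`. Now `[N, N_k] ⊆ N_{k+1}` and `ad h` is invertible on each
`N_k`, so `u` can be corrected step by step: if `exp (ad u) (h + n) - h = r ∈ N_k` and
`[h, v] = r` with `v ∈ N_k`, then `exp (ad (u + v)) (h + n) - h ∈ N_{k+1}`.
-/

open scoped Pointwise

section Exp

variable {K L : Type*} [Field K] [AddCommGroup L] [Module K L]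

lemma expNilpotent_zero : expNilpotent (0 : Module.End K L) = 1 := by
  simp [expNilpotent, Finset.sum_range_succ']

lemma expNilpotent_apply (f : Module.End K L) (x : L) :
    expNilpotent f x =
      ∑ k ∈ Finset.range (Module.finrank K L + 1), (k.factorial : K)⁻¹ • (f ^ k) x := by
  simp [expNilpotent]

end Exp

section Filtration

variable {K L : Type*} [Field K] [LieRing L] [LieAlgebra K L] {F : ℕ → Submodule K L}

lemma lie_mem_succ_of_mem_zero (hbr : ∀ k, ∀ a ∈ F 0, ∀ b ∈ F k, ⁅a, b⁆ ∈ F (k + 1))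
    {k : ℕ} {b a : L} (hb : b ∈ F k) (ha : a ∈ F 0) : ⁅b, a⁆ ∈ F (k + 1) := by
  rw [← lie_skew]
  exact neg_mem (hbr k a ha b hb)

lemma pow_ad_add_apply_sub_mem (hF : Antitone F)
    (hbr : ∀ k, ∀ a ∈ F 0, ∀ b ∈ F k, ⁅a, b⁆ ∈ F (k + 1)) {k : ℕ} {x u v : L}
    (hx : ∀ j, ∀ b ∈ F j, ⁅b, x⁆ ∈ F j) (hu : u ∈ F 0) (hv : v ∈ F k) (j : ℕ) :
    (ad K L (u + v) ^ (j + 2)) x - (ad K L u ^ (j + 2)) x ∈ F (k + 1) := by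
  have hpow : ∀ j, (ad K L u ^ (j + 1)) x ∈ F 0 := by
    intro j
    induction j with
    | zero => rw [zero_add, pow_one, ad_apply]; exact hx 0 u hu
    | succ j ih =>
      rw [pow_succ', Module.End.mul_apply, ad_apply]
      exact hF (Nat.zero_le 1) (hbr 0 u hu _ ih)
  have hrec : ∀ j, (ad K L (u + v) ^ (j + 1)) x - (ad K L u ^ (j + 1)) x
      = ⁅u + v, (ad K L (u + v) ^ j) x - (ad K L u ^ j) x⁆ + ⁅v, (ad K L u ^ j) x⁆ := by
    intro j
    simp only [pow_succ', Module.End.mul_apply, ad_apply, lie_sub, add_lie]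
    abel
  have huv : u + v ∈ F 0 := add_mem hu (hF (Nat.zero_le k) hv)
  induction j with
  | zero =>
    rw [hrec, hrec]
    simp only [pow_zero, sub_self, lie_zero, zero_add]
    exact add_mem (hbr k _ huv _ (hx k v hv)) (lie_mem_succ_of_mem_zero hbr hv (hpow 0))
  | succ j ih =>
    rw [hrec]
    exact add_mem (hF (Nat.le_succ _) (hbr _ _ huv _ ih))
      (lie_mem_succ_of_mem_zero hbr hv (hpow _))

lemma expNilpotent_ad_add_apply_sub_mem [Module.Finite K L] (hF : Antitone F)
    (hbr : ∀ k, ∀ a ∈ F 0, ∀ b ∈ F k, ⁅a, b⁆ ∈ F (k + 1)) {k : ℕ} {x u v : L}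
    (hx : ∀ j, ∀ b ∈ F j, ⁅b, x⁆ ∈ F j) (hu : u ∈ F 0) (hv : v ∈ F k) :
    expNilpotent (ad K L (u + v)) x - expNilpotent (ad K L u) x - ⁅v, x⁆ ∈ F (k + 1) := by
  rcases Nat.eq_zero_or_pos (Module.finrank K L) with hL | hL
  · have : Subsingleton L := Module.finrank_zero_iff.mp hL
    simp [Subsingleton.elim _ (0 : L)]
  · obtain ⟨d, hd⟩ := Nat.exists_eq_succ_of_ne_zero hL.ne'
    simp only [expNilpotent_apply, hd, Finset.sum_range_succ' _ (d + 1),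
      Finset.sum_range_succ' _ d]
    have key : ∀ j ∈ Finset.range d,
        ((j + 2).factorial : K)⁻¹ • (ad K L (u + v) ^ (j + 2)) x -
          ((j + 2).factorial : K)⁻¹ • (ad K L u ^ (j + 2)) x ∈ F (k + 1) := fun j _ => by
      rw [← smul_sub]
      exact Submodule.smul_mem _ _ (pow_ad_add_apply_sub_mem hF hbr hx hu hv j)
    convert Submodule.sum_mem _ key using 1
    simp only [Finset.sum_sub_distrib, zero_add, pow_zero, pow_one, ad_apply, Nat.factorial_zero,
      Nat.factorial_one, Nat.cast_one, inv_one, one_smul, add_lie]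
    abel

lemma exists_expNilpotent_ad_apply_sub_mem [Module.Finite K L] (hF : Antitone F)
    (hbr : ∀ k, ∀ a ∈ F 0, ∀ b ∈ F k, ⁅a, b⁆ ∈ F (k + 1)) {x y : L}
    (hy : ∀ k, (F k).map (ad K L y) = F k) (hxy : x - y ∈ F 0) (k : ℕ) :
    ∃ u ∈ F 0, expNilpotent (ad K L u) x - y ∈ F k := by
  have hyk : ∀ j, ∀ b ∈ F j, ⁅b, y⁆ ∈ F j := fun j b hb => by
    rw [← lie_skew, neg_mem_iff, ← hy j]
    exact Submodule.mem_map_of_mem hb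
  have hx : ∀ j, ∀ b ∈ F j, ⁅b, x⁆ ∈ F j := fun j b hb => by
    rw [← sub_add_cancel x y, lie_add]
    exact add_mem (hF (Nat.le_succ j) (lie_mem_succ_of_mem_zero hbr hb hxy)) (hyk j b hb)
  induction k with
  | zero => exact ⟨0, zero_mem _, by rwa [map_zero, expNilpotent_zero, Module.End.one_apply]⟩
  | succ k ih =>
    obtain ⟨u, hu, hr⟩ := ih
    obtain ⟨v, hv, hvr⟩ : ∃ v ∈ F k, ⁅y, v⁆ = expNilpotent (ad K L u) x - y := by
      rw [← hy k] at hr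
      exact hr
    refine ⟨u + v, add_mem hu (hF (Nat.zero_le k) hv), ?_⟩
    have hsplit : expNilpotent (ad K L (u + v)) x - y =
        (expNilpotent (ad K L (u + v)) x - expNilpotent (ad K L u) x - ⁅v, x⁆) +
          ⁅v, x - y⁆ := by
      rw [lie_sub, ← lie_skew v y, hvr]
      abel
    rw [hsplit]
    exact add_mem (expNilpotent_ad_add_apply_sub_mem hF hbr hx hu hv)
      (lie_mem_succ_of_mem_zero hbr hv hxy)

lemma exists_expNilpotent_ad_apply_eq [Module.Finite K L] (hF : Antitone F)
    (hbr : ∀ k, ∀ a ∈ F 0, ∀ b ∈ F k, ⁅a, b⁆ ∈ F (k + 1)) {m : ℕ} (hm : F m = ⊥) {x y : L}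
    (hy : ∀ k, (F k).map (ad K L y) = F k) (hxy : x - y ∈ F 0) :
    ∃ u ∈ F 0, expNilpotent (ad K L u) x = y := by
  obtain ⟨u, hu, hxu⟩ := exists_expNilpotent_ad_apply_sub_mem hF hbr hy hxy m
  rw [hm, Submodule.mem_bot, sub_eq_zero] at hxu
  exact ⟨u, hu, hxu⟩

end Filtration

lemma add_ne_zero_of_mem_closure {A : Type*} [AddCommMonoid A] {P : Set A}
    (hsum : ∀ (m : ℕ) (c : Fin (m + 1) → A), (∀ i, c i ∈ P) → ∑ i, c i ≠ 0)
    {α x : A} (hα : α ∈ P) (hx : x ∈ AddSubmonoid.closure P) : α + x ≠ 0 := by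
  obtain ⟨l, hl, rfl⟩ := AddSubmonoid.exists_list_of_mem_closure hx
  have hc : ∀ i, (Fin.cons α fun i : Fin l.length => l[i] : Fin (l.length + 1) → A) i ∈ P :=
    Fin.forall_fin_succ.mpr ⟨hα, fun i => hl _ (List.getElem_mem _)⟩
  simpa using hsum l.length _ hc

section WeightSpaces

variable {K L M : Type*} [Field K] [LieRing L] [LieAlgebra K L] [LieRing.IsNilpotent L]
  [AddCommGroup M] [Module K M] [LieRingModule L M] [LieModule K L M] [Module.Finite K M]

lemma LieModule.isUnit_toEnd_genWeightSpace {χ : L → K} {x : L} (hx : χ x ≠ 0) :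
    IsUnit (toEnd K L (genWeightSpace M χ) x) := by
  have h := (isNilpotent_toEnd_sub_algebraMap M χ x).isUnit_add_right_of_commute
    (hx.isUnit.map (algebraMap K (Module.End K (genWeightSpace M χ))))
    (Algebra.commutes _ _).symm
  rwa [sub_add_cancel] at h

lemma LieModule.map_toEnd_biSup_genWeightSpace {T : Set (L → K)} {x : L}
    (hT : ∀ χ ∈ T, χ x ≠ 0) :
    ((⨆ χ ∈ T, genWeightSpace M χ : LieSubmodule K L M) : Submodule K M).map (toEnd K L M x) =
      (⨆ χ ∈ T, genWeightSpace M χ : LieSubmodule K L M) := by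
  set V : LieSubmodule K L M := ⨆ χ ∈ T, genWeightSpace M χ
  refine le_antisymm (Submodule.map_le_iff_le_comap.mpr fun m hm => V.lie_mem hm) ?_
  simp only [V, LieSubmodule.iSup_toSubmodule]
  refine iSup₂_le fun χ hχ m hm => ?_
  obtain ⟨m', hm'⟩ :=
    ((Module.End.isUnit_iff _).mp (isUnit_toEnd_genWeightSpace (hT χ hχ))).2 ⟨m, hm⟩
  have hm' : toEnd K L M x m' = m := congrArg Subtype.val hm'
  rw [← hm']
  exact Submodule.mem_map_of_mem
    (Submodule.mem_iSup_of_mem χ (Submodule.mem_iSup_of_mem hχ m'.2))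

end WeightSpaces

section RootSpaces

variable {K L : Type*} [Field K] [LieRing L] [LieAlgebra K L]
  {H : LieSubalgebra K L} [LieRing.IsNilpotent H]

def addWeights (P S : Set (H → K)) : Set (H → K) :=
  (P + S) ∩ {ψ | rootSpace H ψ ≠ ⊥}

lemma addWeights_mono (P : Set (H → K)) : Monotone (addWeights P) :=
  fun _ _ hST => Set.inter_subset_inter_left _ (Set.add_subset_add_left hST)

lemma mem_biSup_rootSpace {S : Set (H → K)} {χ : H → K} (hχ : χ ∈ S) {x : L}
    (hx : x ∈ rootSpace H χ) : x ∈ ⨆ ψ ∈ S, rootSpace H ψ :=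
  LieSubmodule.mem_iSup_of_mem χ (LieSubmodule.mem_iSup_of_mem hχ hx)

lemma lie_mem_biSup_rootSpace_addWeights {P S : Set (H → K)} {u x : L}
    (hu : u ∈ ⨆ α ∈ P, rootSpace H α) (hx : x ∈ ⨆ χ ∈ S, rootSpace H χ) :
    ⁅u, x⁆ ∈ ⨆ ψ ∈ addWeights P S, rootSpace H ψ := by
  rw [iSup_subtype'] at hu hx
  induction hu using LieSubmodule.iSup_induction' with
  | mem α u hu =>
    induction hx using LieSubmodule.iSup_induction' with
    | mem χ x hx =>
      have hux : ⁅u, x⁆ ∈ rootSpace H (α + χ) :=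
        lie_mem_genWeightSpace_of_mem_genWeightSpace hu hx
      by_cases hbot : rootSpace H ((α : H → K) + χ) = ⊥
      · rw [hbot, LieSubmodule.mem_bot] at hux
        rw [hux]
        exact zero_mem _
      · exact mem_biSup_rootSpace (S := addWeights P S)
          ⟨Set.add_mem_add α.2 χ.2, hbot⟩ hux
    | zero => rw [lie_zero]; exact zero_mem _
    | add x y _ _ hx hy => rw [lie_add]; exact add_mem hx hy
  | zero => rw [zero_lie]; exact zero_mem _
  | add u w _ _ hu hw => rw [add_lie]; exact add_mem hu hw

lemma pow_ad_apply_mem_biSup_rootSpace_iterate {P S : Set (H → K)} {u x : L}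
    (hu : u ∈ ⨆ α ∈ P, rootSpace H α) (hx : x ∈ ⨆ χ ∈ S, rootSpace H χ) (k : ℕ) :
    (ad K L u ^ k) x ∈ ⨆ ψ ∈ (addWeights P)^[k] S, rootSpace H ψ := by
  induction k with
  | zero => exact hx
  | succ k ih =>
    rw [pow_succ', Module.End.mul_apply, ad_apply, Function.iterate_succ_apply']
    exact lie_mem_biSup_rootSpace_addWeights hu ih

variable [Module.Finite K L] {P : Set (H → K)}

lemma succ_le_ncard_of_mem_iterate_addWeights
    (hpos : ∀ α ∈ P, ∀ x ∈ AddSubmonoid.closure P, α + x ≠ 0)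
    {S : Set (H → K)} (hS : S ⊆ {χ | rootSpace H χ ≠ ⊥}) {k : ℕ} {ψ : H → K}
    (hψ : ψ ∈ (addWeights P)^[k] S) :
    k + 1 ≤ {χ | rootSpace H χ ≠ ⊥ ∧ ψ - χ ∈ AddSubmonoid.closure P}.ncard := by
  set below : (H → K) → Set (H → K) :=
    fun ψ => {χ | rootSpace H χ ≠ ⊥ ∧ ψ - χ ∈ AddSubmonoid.closure P}
  have hfin (ψ : H → K) : (below ψ).Finite :=
    (finite_genWeightSpace_ne_bot K H L).subset fun χ hχ => hχ.1
  have hself {ψ : H → K} (hψ : rootSpace H ψ ≠ ⊥) : ψ ∈ below ψ := ⟨hψ, by simp⟩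
  induction k generalizing ψ with
  | zero => exact (Set.ncard_pos (hfin ψ)).mpr ⟨ψ, hself (hS hψ)⟩
  | succ k ih =>
    rw [Function.iterate_succ_apply'] at hψ
    obtain ⟨⟨α, hα, χ, hχ, rfl⟩, hαχ⟩ := hψ
    have hsub : below χ ⊆ below (α + χ) := fun ξ hξ =>
      ⟨hξ.1, by simpa [add_sub_assoc] using add_mem (AddSubmonoid.subset_closure hα) hξ.2⟩
    have hnot : α + χ ∉ below χ := fun ⟨_, hneg⟩ => hpos α hα _ hneg (by abel)
    exact (ih hχ).trans_lt <| Set.ncard_lt_ncard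
      ((Set.ssubset_iff_of_subset hsub).mpr ⟨α + χ, hself hαχ, hnot⟩) (hfin _)

lemma iterate_addWeights_ncard_eq_empty
    (hpos : ∀ α ∈ P, ∀ x ∈ AddSubmonoid.closure P, α + x ≠ 0)
    {S : Set (H → K)} (hS : S ⊆ {χ | rootSpace H χ ≠ ⊥}) :
    (addWeights P)^[{χ : H → K | rootSpace H χ ≠ ⊥}.ncard] S = ∅ := by
  refine Set.eq_empty_of_forall_notMem fun ψ hψ => ?_
  have hle := succ_le_ncard_of_mem_iterate_addWeights hpos hS hψ
  have hW : {χ | rootSpace H χ ≠ ⊥ ∧ ψ - χ ∈ AddSubmonoid.closure P}.ncard ≤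
      {χ : H → K | rootSpace H χ ≠ ⊥}.ncard :=
    Set.ncard_le_ncard (fun χ hχ => hχ.1) (finite_genWeightSpace_ne_bot K H L)
  omega

lemma isNilpotent_ad_of_mem_biSup_rootSpace [IsAlgClosed K]
    (hpos : ∀ α ∈ P, ∀ x ∈ AddSubmonoid.closure P, α + x ≠ 0)
    {u : L} (hu : u ∈ ⨆ α ∈ P, rootSpace H α) : IsNilpotent (ad K L u) := by
  have htop : ⨆ χ ∈ {χ : H → K | rootSpace H χ ≠ ⊥}, rootSpace H χ = ⊤ :=
    eq_top_iff.mpr <| (iSup_genWeightSpace_eq_top' K H L).ge.trans <|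
      iSup_le fun χ => le_biSup (fun χ => rootSpace H χ) χ.genWeightSpace_ne_bot
  refine ⟨{χ : H → K | rootSpace H χ ≠ ⊥}.ncard, LinearMap.ext fun x => ?_⟩
  have hx := pow_ad_apply_mem_biSup_rootSpace_iterate hu (htop ▸ LieSubmodule.mem_top x)
    {χ : H → K | rootSpace H χ ≠ ⊥}.ncard
  rwa [iterate_addWeights_ncard_eq_empty hpos subset_rfl, iSup_emptyset,
    LieSubmodule.mem_bot] at hx

end RootSpaces

theorem exists_exp_ad_eq_cartan_component_general
    {K : Type*} [Field K] [IsAlgClosed K]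
    {L : Type*} [LieRing L] [LieAlgebra K L] [Module.Finite K L]
    (H : LieSubalgebra K L) [H.IsCartanSubalgebra]
    (P : Set (H → K))
    (hP : ∀ α ∈ P, α ≠ 0 ∧ rootSpace H α ≠ ⊥)
    (hadd : ∀ α ∈ P, ∀ β ∈ P, α + β ≠ 0 → rootSpace H (α + β) ≠ ⊥ → α + β ∈ P)
    (hsum : ∀ (m : ℕ) (c : Fin (m + 1) → (H → K)),
      (∀ i, c i ∈ P) → ∑ i, c i ≠ 0)
    (h : H) (hgen : ∀ α : H → K, α ≠ 0 → rootSpace H α ≠ ⊥ → α h ≠ 0)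
    (n : L) (hn : n ∈ ⨆ α ∈ P, rootSpace H α) :
    ∃ u ∈ ⨆ α ∈ P, rootSpace H α,
      IsNilpotent (LieAlgebra.ad K L u) ∧
        expNilpotent (LieAlgebra.ad K L u) ((h : L) + n) = (h : L) := by
  have hpos : ∀ α ∈ P, ∀ x ∈ AddSubmonoid.closure P, α + x ≠ 0 :=
    fun _ hα _ hx => add_ne_zero_of_mem_closure hsum hα hx
  have hPP : addWeights P P ⊆ P := by
    rintro _ ⟨⟨α, hα, β, hβ, rfl⟩, hαβ⟩
    exact hadd α hα β hβ (hpos α hα β (AddSubmonoid.subset_closure hβ)) hαβ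
  let S : ℕ → Set (H → K) := fun k => (addWeights P)^[k] P
  have hS : Antitone S := (addWeights_mono P).antitone_iterate_of_map_le hPP
  let F : ℕ → Submodule K L := fun k => (⨆ χ ∈ S k, rootSpace H χ : LieSubmodule K H L)
  have hF : Antitone F := fun i j hij =>
    (LieSubmodule.toSubmodule_le_toSubmodule _ _).mpr (biSup_mono (hS hij))
  have hbr : ∀ k, ∀ a ∈ F 0, ∀ b ∈ F k, ⁅a, b⁆ ∈ F (k + 1) := fun k a ha b hb => by
    show ⁅a, b⁆ ∈ ⨆ ψ ∈ (addWeights P)^[k + 1] P, rootSpace H ψ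
    rw [Function.iterate_succ_apply']
    exact lie_mem_biSup_rootSpace_addWeights (P := P) ha hb
  have hy : ∀ k, (F k).map (ad K L h) = F k := fun k =>
    map_toEnd_biSup_genWeightSpace fun χ hχ =>
      hgen χ (hP χ (hS (Nat.zero_le k) hχ)).1 (hP χ (hS (Nat.zero_le k) hχ)).2
  have hM : F {χ : H → K | rootSpace H χ ≠ ⊥}.ncard = ⊥ := by
    simp only [F, S, iterate_addWeights_ncard_eq_empty hpos fun α hα => (hP α hα).2,
      iSup_emptyset, LieSubmodule.bot_toSubmodule]
  obtain ⟨u, hu, hexp⟩ := exists_expNilpotent_ad_apply_eq hF hbr hM hy (x := h + n)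
    (by rwa [add_sub_cancel_left])
  exact ⟨u, hu, isNilpotent_ad_of_mem_biSup_rootSpace hpos hu, hexp⟩

/-- **Every element of the generic Borel is unipotently conjugate to its Cartan component.**
`K` algebraically closed of characteristic zero, `L` a finite-dimensional Lie algebra over `K`
with nondegenerate Killing form, `H` a Cartan subalgebra.  Let `P` be a positive system of
roots, `h ∈ H` with `α h ≠ 0` for every root `α`, and `n ∈ N := Σ_{α ∈ P} L_α`.  Then there
is `u ∈ N` with `ad u` nilpotent and `exp (ad u) (h + n) = h`. -/
theorem exists_exp_ad_eq_cartan_component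
    {K : Type*} [Field K] [IsAlgClosed K] [CharZero K]
    {L : Type*} [LieRing L] [LieAlgebra K L] [Module.Finite K L]
    [LieAlgebra.IsKilling K L]
    (H : LieSubalgebra K L) [H.IsCartanSubalgebra]
    (P : Set (H → K))
    (hP : ∀ α ∈ P, α ≠ 0 ∧ rootSpace H α ≠ ⊥)
    (hxor : ∀ α : H → K, α ≠ 0 → rootSpace H α ≠ ⊥ → Xor' (α ∈ P) (-α ∈ P))
    (hadd : ∀ α ∈ P, ∀ β ∈ P, α + β ≠ 0 → rootSpace H (α + β) ≠ ⊥ → α + β ∈ P)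
    (hsum : ∀ (m : ℕ) (c : Fin (m + 1) → (H → K)),
      (∀ i, c i ∈ P) → ∑ i, c i ≠ 0)
    (h : H) (hgen : ∀ α : H → K, α ≠ 0 → rootSpace H α ≠ ⊥ → α h ≠ 0)
    (n : L) (hn : n ∈ ⨆ α ∈ P, rootSpace H α) :
    ∃ u ∈ ⨆ α ∈ P, rootSpace H α,
      IsNilpotent (LieAlgebra.ad K L u) ∧
        expNilpotent (LieAlgebra.ad K L u) ((h : L) + n) = (h : L) :=
  exists_exp_ad_eq_cartan_component_general H P hP hadd hsum h hgen n hn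
end

section
/- Let P be a positive system of roots of L, let h ∈ H satisfy α(h) ≠ 0 for every root α, and let u ∈ N := Σ_{α∈P} L_α be an element with ad u nilpotent. If exp(ad u)(h) lies in H, then u = 0. (Injectivity part of the isomorphism U × 𝔱_gen ≅ 𝔟_gen established, at the level of points, in the paper's proof of the lemma comparing Hamiltonian reduction with restriction over the generic locus: a unipotent element conjugating a generic Cartan element into the Cartan is trivial.) -/
/-!
Write `N = ⨆ α ∈ P, L_α`. Since `P` is closed under addition and never sums to zero, `N` is a
subalgebra normalised by `H`, so `exp (ad u) h - h = Σ_{k ≥ 1} (ad u)^k h / k!` lies in `N`.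
Genericity of `h` makes `N` meet the generalised `0`-eigenspace of `ad h`, which contains `H`,
trivially; hence `exp (ad u) h = h`. Now `exp (ad u) - 1 = q · ad u` with `q` unipotent, so
`⁅u, h⁆ = 0`, i.e. `u ∈ N` is killed by `ad h`, and the same disjointness gives `u = 0`.
-/

open LieModule LieAlgebra

open Finset

theorem sum_range_succ_smul_pow {R A : Type*} [CommSemiring R] [Semiring A] [Algebra R A]
    (c : ℕ → R) (f : A) (n : ℕ) :
    ∑ k ∈ range (n + 1), c k • f ^ k = c 0 • 1 + (∑ k ∈ range n, c (k + 1) • f ^ k) * f := by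
  simp only [sum_range_succ', pow_zero, sum_mul, smul_mul_assoc, pow_succ, add_comm]

theorem IsNilpotent.isUnit_sum_range_smul_pow {R A : Type*} [CommRing R] [Ring A] [Algebra R A]
    {c : ℕ → R} (hc : IsUnit (c 0)) {f : A} (hf : IsNilpotent f) (n : ℕ) :
    IsUnit (∑ k ∈ range (n + 1), c k • f ^ k) := by
  rw [sum_range_succ_smul_pow, Algebra.smul_def, mul_one]
  have hcomm : Commute (∑ k ∈ range n, c (k + 1) • f ^ k) f :=
    Commute.sum_left _ _ _ fun k _ => ((Commute.refl f).pow_left k).smul_left _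
  exact (hcomm.isNilpotent_mul_left hf).isUnit_add_left_of_commute (hc.map _)
    (Algebra.commutes _ _).symm

section ExpNilpotent

variable {K V : Type*} [Field K] [AddCommGroup V] [Module K V]

theorem expNilpotent_eq (f : Module.End K V) :
    expNilpotent f =
      1 + (∑ k ∈ range (Module.finrank K V), ((k + 1).factorial : K)⁻¹ • f ^ k) * f := by
  rw [expNilpotent, sum_range_succ_smul_pow]
  simp

theorem expNilpotent_apply_sub_self_mem {f : Module.End K V} {p : Submodule K V}
    (hp : ∀ y ∈ p, f y ∈ p) {x : V} (hx : f x ∈ p) : expNilpotent f x - x ∈ p := by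
  rw [expNilpotent_eq]
  simp only [LinearMap.add_apply, Module.End.one_apply, add_sub_cancel_left,
    Module.End.mul_apply, LinearMap.coe_sum, Finset.sum_apply, LinearMap.smul_apply]
  exact p.sum_mem fun k _ => p.smul_mem _ (Module.End.pow_apply_mem_of_forall_mem k hp _ hx)

theorem apply_eq_zero_of_expNilpotent_apply_eq_self [FiniteDimensional K V]
    {f : Module.End K V} (hf : IsNilpotent f) {x : V} (hx : expNilpotent f x = x) : f x = 0 := by
  cases subsingleton_or_nontrivial V
  · exact Subsingleton.elim _ _
  obtain ⟨n, hn⟩ :=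
    Nat.exists_eq_succ_of_ne_zero (Module.finrank_pos (R := K) (M := V)).ne'
  rw [expNilpotent_eq, LinearMap.add_apply, Module.End.one_apply, add_eq_left,
    Module.End.mul_apply, hn] at hx
  have hunit := hf.isUnit_sum_range_smul_pow (c := fun k => ((k + 1).factorial : K)⁻¹)
    (by simp) n
  exact ((Module.End.isUnit_iff _).mp hunit).injective (hx.trans (map_zero _).symm)

end ExpNilpotent

section RootSpaces

variable {K L : Type*} [Field K] [LieRing L] [LieAlgebra K L]
  {H : LieSubalgebra K L} [LieRing.IsNilpotent H] {P : Set (H → K)}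

theorem lie_mem_iSup_rootSpace
    (hadd : ∀ α ∈ P, ∀ β ∈ P, rootSpace H (α + β) ≠ ⊥ → α + β ∈ P)
    {x y : L} (hx : x ∈ ⨆ α ∈ P, rootSpace H α) (hy : y ∈ ⨆ α ∈ P, rootSpace H α) :
    ⁅x, y⁆ ∈ ⨆ α ∈ P, rootSpace H α := by
  rw [iSup_subtype'] at hx hy ⊢
  refine LieSubmodule.iSup_induction _ (motive := fun x => ⁅x, y⁆ ∈ _) hx (fun α x hx => ?_)
    (by simp) fun x z hx hz => by simpa only [add_lie] using add_mem hx hz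
  refine LieSubmodule.iSup_induction _ (motive := fun y => ⁅x, y⁆ ∈ _) hy (fun β y hy => ?_)
    (by simp) fun y z hy hz => by simpa only [lie_add] using add_mem hy hz
  have hxy : ⁅x, y⁆ ∈ rootSpace H (α.1 + β.1) :=
    lie_mem_genWeightSpace_of_mem_genWeightSpace hx hy
  by_cases hbot : rootSpace H (α.1 + β.1) = ⊥
  · rw [hbot, LieSubmodule.mem_bot] at hxy
    rw [hxy]
    exact zero_mem _
  · exact LieSubmodule.mem_iSup_of_mem ⟨_, hadd _ α.2 _ β.2 hbot⟩ hxy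

theorem disjoint_genWeightSpaceOf_zero_iSup_rootSpace {h : H} (hgen : ∀ α ∈ P, α h ≠ 0) :
    Disjoint (genWeightSpaceOf L (0 : K) h) (⨆ α ∈ P, rootSpace H α) := by
  have hind := (iSupIndep_genWeightSpaceOf K H L h).disjoint_biSup
    (x := 0) (y := {μ : K | μ ≠ 0}) (by simp)
  refine hind.mono_right (iSup₂_le fun α hα => ?_)
  exact (genWeightSpace_le_genWeightSpaceOf L h α).trans
    (le_biSup (fun μ : K => genWeightSpaceOf L μ h) (hgen α hα))

end RootSpaces

theorem exp_ad_generic_mem_cartan_implies_trivial_general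
    {K : Type*} [Field K]
    {L : Type*} [LieRing L] [LieAlgebra K L] [Module.Finite K L]
    (H : LieSubalgebra K L) [H.IsCartanSubalgebra]
    (P : Set (H → K))
    (hP : ∀ α ∈ P, α ≠ 0 ∧ rootSpace H α ≠ ⊥)
    (hadd : ∀ α ∈ P, ∀ β ∈ P, α + β ≠ 0 → rootSpace H (α + β) ≠ ⊥ → α + β ∈ P)
    (hsum : ∀ (m : ℕ) (c : Fin (m + 1) → (H → K)),
      (∀ i, c i ∈ P) → ∑ i, c i ≠ 0)
    (h : H) (hgen : ∀ α : H → K, α ≠ 0 → rootSpace H α ≠ ⊥ → α h ≠ 0)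
    (u : L) (hu : u ∈ ⨆ α ∈ P, rootSpace H α)
    (hnil : IsNilpotent (LieAlgebra.ad K L u))
    (hmem : expNilpotent (LieAlgebra.ad K L u) (h : L) ∈ H) :
    u = 0 := by
  have hadd' (α) (hα : α ∈ P) (β) (hβ : β ∈ P) : rootSpace H (α + β) ≠ ⊥ → α + β ∈ P :=
    hadd α hα β hβ <| by
      simpa [Fin.sum_univ_two] using hsum 1 ![α, β] (by simp [Fin.forall_fin_two, hα, hβ])
  have hdisj := disjoint_genWeightSpaceOf_zero_iSup_rootSpace fun α hα =>
    hgen α (hP α hα).1 (hP α hα).2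
  have hH_le (x) (hx : x ∈ H) : x ∈ genWeightSpaceOf L (0 : K) h :=
    genWeightSpace_le_genWeightSpaceOf L h 0 (toLieSubmodule_le_rootSpace_zero K L H hx)
  have hsub_mem : expNilpotent (ad K L u) h - h ∈ ⨆ α ∈ P, rootSpace H α := by
    refine expNilpotent_apply_sub_self_mem
      (p := ((⨆ α ∈ P, rootSpace H α : LieSubmodule K H L) : Submodule K L))
      (fun y hy => lie_mem_iSup_rootSpace hadd' hu hy) ?_
    rw [ad_apply, ← lie_skew]
    exact neg_mem ((⨆ α ∈ P, rootSpace H α).lie_mem (x := h) hu)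
  have hfix : expNilpotent (ad K L u) h = h := sub_eq_zero.mp <|
    (LieSubmodule.mem_bot _).mp (hdisj.le_bot ⟨hH_le _ (H.sub_mem hmem h.2), hsub_mem⟩)
  have hcomm : ⁅(h : L), u⁆ = 0 := by
    rw [← lie_skew, ← ad_apply (R := K), apply_eq_zero_of_expNilpotent_apply_eq_self hnil hfix,
      neg_zero]
  refine (LieSubmodule.mem_bot _).mp (hdisj.le_bot ⟨?_, hu⟩)
  exact (mem_genWeightSpaceOf _ _ _ _).mpr ⟨1, by simpa using hcomm⟩

/-- **A unipotent element conjugating a generic Cartan element into the Cartan is trivial.**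
`K` algebraically closed of characteristic zero, `L` a finite-dimensional Lie algebra over `K`
with nondegenerate Killing form, `H` a Cartan subalgebra.  Let `P` be a positive system of
roots, `h ∈ H` with `α h ≠ 0` for every root `α`, and `u ∈ N := Σ_{α ∈ P} L_α` with `ad u`
nilpotent.  If `exp (ad u) h ∈ H`, then `u = 0`. -/
theorem exp_ad_generic_mem_cartan_implies_trivial
    {K : Type*} [Field K] [IsAlgClosed K] [CharZero K]
    {L : Type*} [LieRing L] [LieAlgebra K L] [Module.Finite K L]
    [LieAlgebra.IsKilling K L]
    (H : LieSubalgebra K L) [H.IsCartanSubalgebra]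
    (P : Set (H → K))
    (hP : ∀ α ∈ P, α ≠ 0 ∧ rootSpace H α ≠ ⊥)
    (hxor : ∀ α : H → K, α ≠ 0 → rootSpace H α ≠ ⊥ → Xor' (α ∈ P) (-α ∈ P))
    (hadd : ∀ α ∈ P, ∀ β ∈ P, α + β ≠ 0 → rootSpace H (α + β) ≠ ⊥ → α + β ∈ P)
    (hsum : ∀ (m : ℕ) (c : Fin (m + 1) → (H → K)),
      (∀ i, c i ∈ P) → ∑ i, c i ≠ 0)
    (h : H) (hgen : ∀ α : H → K, α ≠ 0 → rootSpace H α ≠ ⊥ → α h ≠ 0)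
    (u : L) (hu : u ∈ ⨆ α ∈ P, rootSpace H α)
    (hnil : IsNilpotent (LieAlgebra.ad K L u))
    (hmem : expNilpotent (LieAlgebra.ad K L u) (h : L) ∈ H) :
    u = 0 :=
  exp_ad_generic_mem_cartan_implies_trivial_general H P hP hadd hsum h hgen u hu hnil hmem
end
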